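/- Let c : (0,∞) → [0,∞) be measurable with ∫₀^∞ x c(x) dx = 1, and let L > 0 satisfy the constraint ∫₀^∞ x^{1/3} c(x) dx = L^{1/3} ∫₀^∞ c(x) dx (all integrals finite). Then [∫₀^∞ x^{1/3} ((x/L)^{1/3} − 1) c(x) dx]² ≤ ∫₀^∞ x^{−1/3} c(x) dx − [∫₀^∞ c(x) dx]² / ∫₀^∞ x^{1/3} c(x) dx. -/
import Mathlib


open MeasureTheory Set

theorem stmt_2 (L : ℝ) (hL : 0 < L) (c : ℝ → ℝ)
    (hnn : ∀ x ∈ Ioi (0:ℝ), 0 ≤ c x)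
    (hc : IntegrableOn c (Ioi 0))
    (h13 : IntegrableOn (fun x => x ^ ((1:ℝ)/3) * c x) (Ioi 0))
    (hm13 : IntegrableOn (fun x => x ^ (-(1:ℝ)/3) * c x) (Ioi 0))
    (h1 : IntegrableOn (fun x => x * c x) (Ioi 0))
    (hflux : IntegrableOn (fun x => x ^ ((1:ℝ)/3) * ((x/L) ^ ((1:ℝ)/3) - 1) * c x) (Ioi 0))
    (hmass : ∫ x in Ioi (0:ℝ), x * c x = 1)
    (hconstraint : ∫ x in Ioi (0:ℝ), x ^ ((1:ℝ)/3) * c x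
      = L ^ ((1:ℝ)/3) * ∫ x in Ioi (0:ℝ), c x) :
    (∫ x in Ioi (0:ℝ), x ^ ((1:ℝ)/3) * ((x/L) ^ ((1:ℝ)/3) - 1) * c x) ^ 2
      ≤ (∫ x in Ioi (0:ℝ), x ^ (-(1:ℝ)/3) * c x)
        - (∫ x in Ioi (0:ℝ), c x) ^ 2 / (∫ x in Ioi (0:ℝ), x ^ ((1:ℝ)/3) * c x) := by
  set A := ∫ x in Ioi (0:ℝ), c x with hA
  set B := ∫ x in Ioi (0:ℝ), x ^ ((1:ℝ)/3) * c x with hB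
  set M := ∫ x in Ioi (0:ℝ), x ^ (-(1:ℝ)/3) * c x with hM
  set F := ∫ x in Ioi (0:ℝ), x ^ ((1:ℝ)/3) * ((x/L) ^ ((1:ℝ)/3) - 1) * c x with hF
  have hA0 : 0 ≤ A := setIntegral_nonneg measurableSet_Ioi hnn
  -- pointwise expansion
  have heq : EqOn
      (fun x => (x ^ (-(1:ℝ)/6) * ((x/L) ^ ((1:ℝ)/3) - 1) - F * x ^ ((1:ℝ)/2))^2 * c x)
      (fun x => (L ^ (-(2:ℝ)/3) * (x ^ ((1:ℝ)/3) * c x) - (2 * L ^ (-(1:ℝ)/3)) * c x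
          + x ^ (-(1:ℝ)/3) * c x)
        - (2*F) * (x ^ ((1:ℝ)/3) * ((x/L) ^ ((1:ℝ)/3) - 1) * c x)
        + F^2 * (x * c x)) (Ioi 0) := by
    intro x hx
    have hx0 : (0:ℝ) < x := hx
    dsimp only
    set C := c x with hC
    set u := x ^ ((1:ℝ)/6) with hu
    set l := L ^ ((1:ℝ)/3) with hl
    have hu0 : 0 < u := Real.rpow_pos_of_pos hx0 _
    have hl0 : 0 < l := Real.rpow_pos_of_pos hL _
    have e1 : x ^ ((1:ℝ)/2) = u^3 := by
      rw [hu, ← Real.rpow_natCast (x ^ ((1:ℝ)/6)) 3, ← Real.rpow_mul hx0.le]; norm_num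
    have e2 : x ^ ((1:ℝ)/3) = u^2 := by
      rw [hu, ← Real.rpow_natCast (x ^ ((1:ℝ)/6)) 2, ← Real.rpow_mul hx0.le]; norm_num
    have e3 : x ^ (-(1:ℝ)/6) = u⁻¹ := by
      rw [show -(1:ℝ)/6 = -((1:ℝ)/6) by norm_num, Real.rpow_neg hx0.le, hu]
    have e4 : x ^ (-(1:ℝ)/3) = (u^2)⁻¹ := by
      rw [show -(1:ℝ)/3 = -((1:ℝ)/3) by norm_num, Real.rpow_neg hx0.le, e2]
    have e6 : (x/L) ^ ((1:ℝ)/3) = u^2 / l := by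
      rw [Real.div_rpow hx0.le hL.le, e2, hl]
    have e7 : L ^ (-(1:ℝ)/3) = l⁻¹ := by
      rw [show -(1:ℝ)/3 = -((1:ℝ)/3) by norm_num, Real.rpow_neg hL.le, hl]
    have e8 : L ^ (-(2:ℝ)/3) = (l^2)⁻¹ := by
      rw [show -(2:ℝ)/3 = -(1:ℝ)/3 + -(1:ℝ)/3 by norm_num, Real.rpow_add hL, e7, sq, mul_inv]
    have e5 : x = u^6 := by
      rw [hu, ← Real.rpow_natCast (x ^ ((1:ℝ)/6)) 6, ← Real.rpow_mul hx0.le]; norm_num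
    rw [e6, e1, e2, e3, e4, e7, e8, e5]
    field_simp
    ring
  have hnonneg : 0 ≤ ∫ x in Ioi (0:ℝ),
      (x ^ (-(1:ℝ)/6) * ((x/L) ^ ((1:ℝ)/3) - 1) - F * x ^ ((1:ℝ)/2))^2 * c x :=
    setIntegral_nonneg measurableSet_Ioi fun x hx => mul_nonneg (sq_nonneg _) (hnn x hx)
  have i0 : IntegrableOn (fun x => L ^ (-(2:ℝ)/3) * (x ^ ((1:ℝ)/3) * c x)
      - (2 * L ^ (-(1:ℝ)/3)) * c x) (Ioi 0) := (h13.const_mul _).sub (hc.const_mul _)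
  have i1 : IntegrableOn (fun x => L ^ (-(2:ℝ)/3) * (x ^ ((1:ℝ)/3) * c x)
      - (2 * L ^ (-(1:ℝ)/3)) * c x + x ^ (-(1:ℝ)/3) * c x) (Ioi 0) := i0.add hm13
  have i2 : IntegrableOn (fun x => (2*F) * (x ^ ((1:ℝ)/3) * ((x/L) ^ ((1:ℝ)/3) - 1) * c x))
      (Ioi 0) := hflux.const_mul _
  have i3 : IntegrableOn (fun x => F^2 * (x * c x)) (Ioi 0) := h1.const_mul _
  have i12 : IntegrableOn (fun x => (L ^ (-(2:ℝ)/3) * (x ^ ((1:ℝ)/3) * c x)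
      - (2 * L ^ (-(1:ℝ)/3)) * c x + x ^ (-(1:ℝ)/3) * c x)
      - (2*F) * (x ^ ((1:ℝ)/3) * ((x/L) ^ ((1:ℝ)/3) - 1) * c x)) (Ioi 0) := i1.sub i2
  have key : (∫ x in Ioi (0:ℝ),
      (x ^ (-(1:ℝ)/6) * ((x/L) ^ ((1:ℝ)/3) - 1) - F * x ^ ((1:ℝ)/2))^2 * c x)
      = (L ^ (-(2:ℝ)/3) * B - (2 * L ^ (-(1:ℝ)/3)) * A + M) - (2*F) * F + F^2 * 1 := by
    rw [setIntegral_congr_fun measurableSet_Ioi heq, integral_add i12 i3,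
      integral_sub i1 i2, integral_add i0 hm13, integral_sub (h13.const_mul _) (hc.const_mul _),
      integral_const_mul, integral_const_mul, integral_const_mul, integral_const_mul, hmass]
  have hLB : L ^ (-(2:ℝ)/3) * B = L ^ (-(1:ℝ)/3) * A := by
    rw [hconstraint, ← mul_assoc, ← Real.rpow_add hL]
    norm_num
  have hbound : F^2 ≤ M - L ^ (-(1:ℝ)/3) * A := by nlinarith [hnonneg, key, hLB]
  have hAB : A^2 / B = L ^ (-(1:ℝ)/3) * A := by
    rcases eq_or_lt_of_le hA0 with h | h
    · rw [← h]; simp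
    · rw [hconstraint, show -(1:ℝ)/3 = -((1:ℝ)/3) by norm_num, Real.rpow_neg hL.le]
      have hl0 : L ^ ((1:ℝ)/3) ≠ 0 := (Real.rpow_pos_of_pos hL _).ne'
      field_simp
  linarith
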